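/- If (A, ≺, ≻) is a pre-alternative superalgebra, then A with the product x ⋆ y = x ≺ y + x ≻ y is an alternative superalgebra. -/
import Mathlib


open scoped TensorProduct

/-- The super sign `(-1)^{ij}` for parities `i j : ZMod 2`. -/
def sgn (K : Type*) [Field K] (i j : ZMod 2) : K := (-1 : K) ^ (i * j).val

/-- `(A, mul)` with grading `G` is an alternative superalgebra. -/
def IsAltSuper {K A : Type*} [Field K] [AddCommGroup A] [Module K A]
    (G : ZMod 2 → Submodule K A) (mul : A →ₗ[K] A →ₗ[K] A) : Prop :=
  (∀ i j, ∀ x ∈ G i, ∀ y ∈ G j, mul x y ∈ G (i + j)) ∧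
  (∀ i j k, ∀ x ∈ G i, ∀ y ∈ G j, ∀ z ∈ G k,
    (mul (mul x y) z - mul x (mul y z))
      + sgn K i j • (mul (mul y x) z - mul y (mul x z)) = 0) ∧
  (∀ i j k, ∀ x ∈ G i, ∀ y ∈ G j, ∀ z ∈ G k,
    (mul (mul x y) z - mul x (mul y z))
      + sgn K j k • (mul (mul x z) y - mul x (mul z y)) = 0)

/-- `(A, pc, ps)` (with `pc = ≺`, `ps = ≻`) is a pre-alternative superalgebra. -/
def IsPreAlt {K A : Type*} [Field K] [AddCommGroup A] [Module K A]
    (G : ZMod 2 → Submodule K A) (pc ps : A →ₗ[K] A →ₗ[K] A) : Prop :=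
  (∀ i j, ∀ x ∈ G i, ∀ y ∈ G j, pc x y ∈ G (i + j)) ∧
  (∀ i j, ∀ x ∈ G i, ∀ y ∈ G j, ps x y ∈ G (i + j)) ∧
  (∀ i j k, ∀ x ∈ G i, ∀ y ∈ G j, ∀ z ∈ G k,
    ps ((pc + ps) x y) z - ps x (ps y z)
      + sgn K i j • (ps ((pc + ps) y x) z - ps y (ps x z)) = 0) ∧
  (∀ i j k, ∀ x ∈ G i, ∀ y ∈ G j, ∀ z ∈ G k,
    pc (pc x y) z - pc x ((pc + ps) y z)
      + sgn K j k • (pc (pc x z) y - pc x ((pc + ps) z y)) = 0) ∧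
  (∀ i j k, ∀ x ∈ G i, ∀ y ∈ G j, ∀ z ∈ G k,
    pc (ps x y) z - ps x (pc y z)
      + sgn K i j • (pc (pc y x) z - pc y ((pc + ps) x z)) = 0) ∧
  (∀ i j k, ∀ x ∈ G i, ∀ y ∈ G j, ∀ z ∈ G k,
    pc (ps x y) z - ps x (pc y z)
      + sgn K j k • (ps ((pc + ps) x z) y - ps x (ps z y)) = 0)


lemma sgn_mul_self (K : Type*) [Field K] (i j : ZMod 2) : sgn K i j * sgn K i j = 1 := by
  unfold sgn
  rw [← pow_add, ← two_mul, pow_mul]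
  norm_num

lemma sgn_comm (K : Type*) [Field K] (i j : ZMod 2) : sgn K j i = sgn K i j := by
  unfold sgn; rw [mul_comm]

/-- a pre-alternative superalgebra with the total product
`x ⋆ y = x ≺ y + x ≻ y` is an alternative superalgebra. -/
theorem stmt13 {K A : Type*} [Field K] [AddCommGroup A] [Module K A]
    (G : ZMod 2 → Submodule K A) (pc ps : A →ₗ[K] A →ₗ[K] A)
    (hpa : IsPreAlt G pc ps) :
    IsAltSuper G (pc + ps) := by
  obtain ⟨h1, h2, h3, h4, h5, h6⟩ := hpa
  refine ⟨fun i j x hx y hy => ?_, ?_, ?_⟩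
  · simp only [LinearMap.add_apply]
    exact add_mem (h1 i j x hx y hy) (h2 i j x hx y hy)
  · intro i j k x hx y hy z hz
    have e1 := h3 i j k x hx y hy z hz
    have e2 := h5 i j k x hx y hy z hz
    have e3 := h5 j i k y hy x hx z hz
    rw [sgn_comm] at e3
    have e3' := congrArg (fun v => sgn K i j • v) e3
    simp only [smul_add, smul_sub, smul_smul, sgn_mul_self, one_smul, smul_zero] at e3'
    simp only [LinearMap.add_apply, map_add, smul_add, smul_sub] at e1 e2 e3' ⊢
    linear_combination (norm := module) e1 + e2 + e3'
  · intro i j k x hx y hy z hz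
    have e1 := h4 i j k x hx y hy z hz
    have e2 := h6 i j k x hx y hy z hz
    have e3 := h6 i k j x hx z hz y hy
    rw [sgn_comm] at e3
    have e3' := congrArg (fun v => sgn K j k • v) e3
    simp only [smul_add, smul_sub, smul_smul, sgn_mul_self, one_smul, smul_zero] at e3'
    simp only [LinearMap.add_apply, map_add, smul_add, smul_sub] at e1 e2 e3' ⊢
    linear_combination (norm := module) e1 + e2 + e3'
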